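/- The set ℚ × ℚ is dense in ℝ × ℝ with respect to the cross topology γ, and consequently non(nwd_γ) = ℵ₀ and add(nwd_γ) = ℵ₀. -/

import Mathlib

open Topology Set

/-- The cross topology `γ` on `ℝ × ℝ`: a set is open iff all of its vertical and
horizontal sections are open in `ℝ`. -/
def crossTopology : TopologicalSpace (ℝ × ℝ) where
  IsOpen G := (∀ x : ℝ, IsOpen {y : ℝ | (x, y) ∈ G}) ∧ (∀ y : ℝ, IsOpen {x : ℝ | (x, y) ∈ G})
  isOpen_univ := ⟨fun _ => isOpen_univ, fun _ => isOpen_univ⟩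
  isOpen_inter := fun A B hA hB =>
    ⟨fun x => (hA.1 x).inter (hB.1 x), fun y => (hA.2 y).inter (hB.2 y)⟩
  isOpen_sUnion := fun S hS => by
    constructor
    · intro x
      have h : {y : ℝ | (x, y) ∈ ⋃₀ S} = ⋃ G ∈ S, {y : ℝ | (x, y) ∈ G} := by
        ext y; simp
      rw [h]
      exact isOpen_biUnion fun G hG => (hS G hG).1 x
    · intro y
      have h : {x : ℝ | (x, y) ∈ ⋃₀ S} = ⋃ G ∈ S, {x : ℝ | (x, y) ∈ G} := by
        ext x; simp
      rw [h]
      exact isOpen_biUnion fun G hG => (hS G hG).2 y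

/-- The uniformity number of the ideal of nowhere dense subsets of `Z`: the least
cardinality of a subset of `Z` that is not nowhere dense. -/
noncomputable def nonNwd (Z : Type*) [TopologicalSpace Z] : Cardinal :=
  sInf {c : Cardinal | ∃ s : Set Z, Cardinal.mk s = c ∧ ¬ IsNowhereDense s}

/-- The additivity of the ideal of nowhere dense subsets of `Z`: the least cardinality
of a family of nowhere dense sets whose union is not nowhere dense. -/
noncomputable def addNwd (Z : Type*) [TopologicalSpace Z] : Cardinal :=
  sInf {c : Cardinal | ∃ W : Set (Set Z), Cardinal.mk W = c ∧
    (∀ s ∈ W, IsNowhereDense s) ∧ ¬ IsNowhereDense (⋃₀ W)}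

/-! Each section of a `γ`-open set is open in `ℝ`, so from any point of it one reaches a point
of `ℚ × ℚ` by moving first vertically, then horizontally. Points are `γ`-closed with empty
`γ`-interior, so finite sets are `γ`-nowhere dense, while the countable dense set `ℚ × ℚ`, the
union of countably many points, is not. -/

open scoped Cardinal

section NowhereDense

variable {X : Type*} [TopologicalSpace X]

lemma IsNowhereDense.union {s t : Set X} (hs : IsNowhereDense s) (ht : IsNowhereDense t) :
    IsNowhereDense (s ∪ t) := by
  rw [IsNowhereDense, closure_union,
    interior_union_isClosed_of_interior_empty isClosed_closure ht, hs]

lemma Set.Finite.isNowhereDense_biUnion {ι : Type*} {I : Set ι} (hI : I.Finite)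
    {f : ι → Set X} (hf : ∀ i ∈ I, IsNowhereDense (f i)) : IsNowhereDense (⋃ i ∈ I, f i) := by
  induction I, hI using Set.Finite.induction_on with
  | empty => simp
  | @insert i I _ _ ih =>
    rw [biUnion_insert]
    exact (hf i (mem_insert i I)).union (ih fun j hj => hf j (mem_insert_of_mem i hj))

lemma Dense.not_isNowhereDense [Nonempty X] {s : Set X} (hs : Dense s) :
    ¬ IsNowhereDense s := by
  rw [IsNowhereDense, hs.closure_eq, interior_univ]
  exact univ_nonempty.ne_empty

variable (hpt : ∀ x : X, IsNowhereDense {x})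
include hpt

lemma Set.Finite.isNowhereDense_of_forall_singleton {s : Set X} (hs : s.Finite) :
    IsNowhereDense s := by
  simpa only [biUnion_of_singleton] using hs.isNowhereDense_biUnion fun x _ => hpt x

lemma Set.Infinite.of_not_isNowhereDense {s : Set X} (hs : ¬ IsNowhereDense s) : s.Infinite :=
  fun hfin => hs (hfin.isNowhereDense_of_forall_singleton hpt)

lemma Set.Countable.mk_eq_aleph0_of_not_isNowhereDense {s : Set X} (hs : s.Countable)
    (hns : ¬ IsNowhereDense s) : #s = ℵ₀ :=
  have := hs.to_subtype
  have := (Set.Infinite.of_not_isNowhereDense hpt hns).to_subtype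
  Cardinal.mk_eq_aleph0 s

lemma nonNwd_eq_aleph0 {s : Set X} (hs : s.Countable) (hns : ¬ IsNowhereDense s) :
    nonNwd X = ℵ₀ := by
  refine IsLeast.csInf_eq ⟨⟨s, hs.mk_eq_aleph0_of_not_isNowhereDense hpt hns, hns⟩, ?_⟩
  rintro _ ⟨t, rfl, hnt⟩
  exact Cardinal.aleph0_le_mk_iff.2 (Set.Infinite.of_not_isNowhereDense hpt hnt).to_subtype

lemma addNwd_eq_aleph0 {s : Set X} (hs : s.Countable) (hns : ¬ IsNowhereDense s) :
    addNwd X = ℵ₀ := by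
  refine IsLeast.csInf_eq ⟨⟨(fun x => {x}) '' s, ?_, ?_, ?_⟩, ?_⟩
  · rw [Cardinal.mk_image_eq singleton_injective]
    exact hs.mk_eq_aleph0_of_not_isNowhereDense hpt hns
  · rintro _ ⟨x, -, rfl⟩
    exact hpt x
  · rwa [sUnion_image, biUnion_of_singleton]
  · rintro _ ⟨W, rfl, hW, hnW⟩
    refine Cardinal.aleph0_le_mk_iff.2 (Set.infinite_coe_iff.2 fun hfin => hnW ?_)
    rw [sUnion_eq_biUnion]
    exact hfin.isNowhereDense_biUnion hW

end NowhereDense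

section CrossTopology

lemma crossTopology_le_prod :
    crossTopology ≤ (instTopologicalSpaceProd : TopologicalSpace (ℝ × ℝ)) :=
  fun _ hG => ⟨fun x => hG.preimage (Continuous.prodMk_right x),
    fun y => hG.preimage (Continuous.prodMk_left y)⟩

lemma not_isOpen_singleton_crossTopology (p : ℝ × ℝ) : ¬ IsOpen[crossTopology] {p} := by
  intro hp
  have hsection : {y : ℝ | (p.1, y) ∈ ({p} : Set (ℝ × ℝ))} = {p.2} := by
    ext y; simp [Prod.ext_iff]
  exact not_isOpen_singleton p.2 (hsection ▸ hp.1 p.1)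

lemma isNowhereDense_singleton_crossTopology (p : ℝ × ℝ) :
    @IsNowhereDense _ crossTopology {p} := by
  have hclosed : IsClosed[crossTopology] {p} := isClosed_singleton.mono crossTopology_le_prod
  let := crossTopology
  rw [hclosed.isNowhereDense_iff]
  rcases subset_singleton_iff_eq.1 (interior_subset (s := {p})) with h | h
  · exact h
  · exact absurd (h ▸ isOpen_interior) (not_isOpen_singleton_crossTopology p)

lemma Dense.prod_crossTopology {A B : Set ℝ} (hA : Dense A) (hB : Dense B) :
    @Dense _ crossTopology (A ×ˢ B) := by
  let := crossTopology
  rw [dense_iff_inter_open]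
  rintro U hU ⟨⟨x, y⟩, hxy⟩
  obtain ⟨b, hbU, hbB⟩ := dense_iff_inter_open.1 hB _ (hU.1 x) ⟨y, hxy⟩
  obtain ⟨a, haU, haA⟩ := dense_iff_inter_open.1 hA _ (hU.2 b) ⟨x, hbU⟩
  exact ⟨(a, b), haU, haA, hbB⟩

end CrossTopology

/-- `ℚ × ℚ` is dense in `(ℝ × ℝ, γ)`, and consequently `non(nwd_γ) = ℵ₀` and
`add(nwd_γ) = ℵ₀`. -/
theorem rat_sq_dense_cross_and_invariants :
    @Dense (ℝ × ℝ) crossTopology {p : ℝ × ℝ | ∃ q r : ℚ, p = ((q : ℝ), (r : ℝ))} ∧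
    @nonNwd (ℝ × ℝ) crossTopology = Cardinal.aleph0 ∧
    @addNwd (ℝ × ℝ) crossTopology = Cardinal.aleph0 := by
  let := crossTopology
  have hrat : {p : ℝ × ℝ | ∃ q r : ℚ, p = ((q : ℝ), (r : ℝ))} =
      range ((↑) : ℚ → ℝ) ×ˢ range ((↑) : ℚ → ℝ) := by
    ext ⟨x, y⟩; simp [eq_comm]
  rw [hrat]
  have hdense := Rat.denseRange_cast.prod_crossTopology Rat.denseRange_cast
  have hcount := (countable_range ((↑) : ℚ → ℝ)).prod (countable_range ((↑) : ℚ → ℝ))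
  exact ⟨hdense,
    nonNwd_eq_aleph0 isNowhereDense_singleton_crossTopology hcount hdense.not_isNowhereDense,
    addNwd_eq_aleph0 isNowhereDense_singleton_crossTopology hcount hdense.not_isNowhereDense⟩
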